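/- arXiv:1210.3229 — 3 statements merged into one kernel-verified Lean document; each statement's English description precedes it below -/
import Mathlib

section
/- For every integer i ≥ 0 and all reals t₀, …, t_i with t_j > 0 for all j and Σ_{j=0}^{i} t_j < Δ, one has the identity ∫_{Σ_{j=0}^{i−1} t_j}^{Σ_{j=0}^{i} t_j} g(s) · ∏_{k=0}^{i} F(t_k, s − Σ_{j=0}^{k−1} t_j) ds = (∏_{k=0}^{i−1} λ²·t_k·exp(−λ·t_k)) · ∫₀^{t_i} (1 + λ·u)·exp(−λ·u) · λ²·(t_i − u)·exp(−λ·(t_i − u)) · g(u + Σ_{j=0}^{i−1} t_j) du (empty sums being 0 and empty products being 1). -/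
open Real Set Filter MeasureTheory

/-- Conditional ISI density `F t s` given time-to-live `s` of the feedback impulse. -/
noncomputable def F (lam τ t s : ℝ) : ℝ :=
  if 0 < t ∧ t < s then lam ^ 2 * t * Real.exp (-lam * t)
  else if s ≤ t ∧ t ≤ s + τ then
    (1 + lam * s) * Real.exp (-lam * s) * (lam ^ 2 * (t - s) * Real.exp (-lam * (t - s)))
  else 0

/-- Regular part of the stationary time-to-live density. -/
noncomputable def g (lam A B s : ℝ) : ℝ := A + B * Real.exp (2 * lam * s)

/-- Weight of the singular (Dirac) part of the stationary time-to-live distribution. -/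
noncomputable def aC (lam Δ : ℝ) : ℝ :=
  4 * Real.exp (2 * lam * Δ) / ((3 + 2 * lam * Δ) * Real.exp (2 * lam * Δ) + 1)

/-- `T t p q = Σ_{j=p}^{q-1} t_j` (empty sums are `0`). -/
def T {n : ℕ} (t : Fin n → ℝ) (p q : ℕ) : ℝ :=
  ∑ j : Fin n, if p ≤ (j : ℕ) ∧ (j : ℕ) < q then t j else 0

/-- `Ilow lam Δ τ A B i t` is the term `I_i`, `0 ≤ i ≤ m-1`, of the joint ISI density. -/
noncomputable def Ilow (lam Δ τ A B : ℝ) {m : ℕ} (i : ℕ) (t : Fin (m + 1) → ℝ) : ℝ :=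
  (∏ k : Fin (m + 1), if i + 1 ≤ (k : ℕ) then F lam τ (t k) (Δ - T t (i + 1) (k : ℕ)) else 1) *
    ∫ s in T t 0 i..T t 0 (i + 1),
      g lam A B s *
        ∏ k : Fin (m + 1), if (k : ℕ) ≤ i then F lam τ (t k) (s - T t 0 (k : ℕ)) else 1

/-- `Itop lam Δ τ A B t` is the term `I_m` of the joint ISI density. -/
noncomputable def Itop (lam Δ τ A B : ℝ) {m : ℕ} (t : Fin (m + 1) → ℝ) : ℝ :=
  (∫ s in T t 0 m..Δ, g lam A B s * ∏ k : Fin (m + 1), F lam τ (t k) (s - T t 0 (k : ℕ)))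
    + aC lam Δ * ∏ k : Fin (m + 1), F lam τ (t k) (Δ - T t 0 (k : ℕ))

/-- `J lam Δ τ A B t = Σ_{i=0}^{m} I_i(t)`, the joint density of `m+1` consecutive ISIs. -/
noncomputable def J (lam Δ τ A B : ℝ) {m : ℕ} (t : Fin (m + 1) → ℝ) : ℝ :=
  (∑ i ∈ Finset.range m, Ilow lam Δ τ A B i t) + Itop lam Δ τ A B t

/-! For `s` in the last window `(T t 0 i, T t 0 (i + 1)]`, each earlier interval `t k`, `k < i`,
ends before its time-to-live `s - T t 0 k` runs out, so its factor is the Erlang density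
`λ² t e^{-λt}`. The last factor is the delayed branch at `u = s - T t 0 i ∈ (0, t i]`, which
needs `t i ≤ τ`; this holds since `t i < Δ < τ`. The identity is then the substitution
`s = u + T t 0 i`. -/

section PartialSums

variable {n : ℕ} (t : Fin n → ℝ)

lemma T_succ {p : ℕ} (k : Fin n) (hpk : p ≤ k) : T t p (k + 1) = T t p k + t k := by
  classical
  have hk : t k = ∑ j : Fin n, if j = k then t j else 0 := by simp
  rw [hk, T, T, ← Finset.sum_add_distrib]
  refine Finset.sum_congr rfl fun j _ => ?_
  split_ifs <;> simp_all [Fin.ext_iff] <;> omega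

variable {t}

lemma T_nonneg (ht : ∀ j, 0 ≤ t j) (p q : ℕ) : 0 ≤ T t p q :=
  Finset.sum_nonneg fun j _ => by split_ifs <;> simp [ht j]

lemma T_mono_right (ht : ∀ j, 0 ≤ t j) (p : ℕ) {q r : ℕ} (hqr : q ≤ r) :
    T t p q ≤ T t p r :=
  Finset.sum_le_sum fun j _ => by
    split_ifs with h₁ h₂
    exacts [le_rfl, by omega, ht j, le_rfl]

end PartialSums

section ConditionalDensity

variable (lam τ : ℝ) {t s : ℝ}

lemma F_of_lt (ht : 0 < t) (hts : t < s) : F lam τ t s = lam ^ 2 * t * exp (-lam * t) :=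
  if_pos ⟨ht, hts⟩

lemma F_of_le_of_le (hst : s ≤ t) (hts : t ≤ s + τ) :
    F lam τ t s = (1 + lam * s) * exp (-lam * s) * (lam ^ 2 * (t - s) * exp (-lam * (t - s))) := by
  rw [F, if_neg fun h => (hst.trans_lt h.2).false, if_pos ⟨hst, hts⟩]

lemma prod_F_eq_of_T_lt {i : ℕ} {t : Fin (i + 1) → ℝ} (hpos : ∀ j, 0 < t j) (hs : T t 0 i < s) :
    ∏ k : Fin (i + 1), F lam τ (t k) (s - T t 0 k)
      = (∏ k : Fin (i + 1), if (k : ℕ) < i then lam ^ 2 * t k * exp (-lam * t k) else 1) *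
          F lam τ (t (Fin.last i)) (s - T t 0 i) := by
  rw [Fin.prod_univ_castSucc, Fin.prod_univ_castSucc]
  simp only [Fin.val_last, lt_self_iff_false, if_false, mul_one, Fin.val_castSucc]
  congr 1
  refine Finset.prod_congr rfl fun k _ => ?_
  have hend : T t 0 (k.castSucc + 1) ≤ T t 0 i := T_mono_right (fun j => (hpos j).le) 0 k.isLt
  rw [T_succ t k.castSucc (Nat.zero_le _), Fin.val_castSucc] at hend
  rw [if_pos k.isLt, F_of_lt lam τ (hpos _) (by linarith)]

end ConditionalDensity

lemma intervalIntegral_eq_mul_integral_sub_of_eqOn {φ ψ : ℝ → ℝ} {a h c : ℝ} (hh : 0 ≤ h)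
    (heq : EqOn φ (fun s => c * ψ (s - a)) (Ioc a (a + h))) :
    ∫ s in a..a + h, φ s = c * ∫ u in (0 : ℝ)..h, ψ u := by
  have hφ : ∫ s in a..a + h, φ s = ∫ s in a..a + h, c * ψ (s - a) :=
    intervalIntegral.integral_congr_ae <| Eventually.of_forall fun s hs =>
      heq (by rwa [uIoc_of_le (by linarith)] at hs)
  rw [hφ, intervalIntegral.integral_const_mul, intervalIntegral.integral_comp_sub_right,
    sub_self, add_sub_cancel_left]

theorem stmt5_general (lam Δ τ A B : ℝ) (hΔτ : Δ < τ) (i : ℕ)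
    (t : Fin (i + 1) → ℝ) (hpos : ∀ j, 0 < t j) (hsum : T t 0 (i + 1) < Δ) :
    (∫ s in T t 0 i..T t 0 (i + 1),
        g lam A B s * ∏ k : Fin (i + 1), F lam τ (t k) (s - T t 0 (k : ℕ)))
    = (∏ k : Fin (i + 1), if (k : ℕ) < i then lam ^ 2 * t k * Real.exp (-lam * t k) else 1) *
      ∫ u in (0 : ℝ)..t (Fin.last i),
        (1 + lam * u) * Real.exp (-lam * u) *
          (lam ^ 2 * (t (Fin.last i) - u) * Real.exp (-lam * (t (Fin.last i) - u))) *
          g lam A B (u + T t 0 i) := by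
  have hlast : T t 0 (i + 1) = T t 0 i + t (Fin.last i) := by
    simpa using T_succ t (Fin.last i) (Nat.zero_le _)
  have hstart : 0 ≤ T t 0 i := T_nonneg (fun j => (hpos j).le) 0 i
  rw [hlast] at hsum ⊢
  refine intervalIntegral_eq_mul_integral_sub_of_eqOn (hpos _).le fun s ⟨hs₀, hs₁⟩ => ?_
  rw [prod_F_eq_of_T_lt lam τ hpos hs₀, F_of_le_of_le lam τ (by linarith) (by linarith)]
  simp only [sub_add_cancel]
  ring

/-- the reduction identity of Appendix C for the integral factor. -/
theorem stmt5 (lam Δ τ A B : ℝ) (hlam : 0 < lam) (hΔ : 0 < Δ) (hΔτ : Δ < τ) (i : ℕ)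
    (t : Fin (i + 1) → ℝ) (hpos : ∀ j, 0 < t j) (hsum : T t 0 (i + 1) < Δ) :
    (∫ s in T t 0 i..T t 0 (i + 1),
        g lam A B s * ∏ k : Fin (i + 1), F lam τ (t k) (s - T t 0 (k : ℕ)))
    = (∏ k : Fin (i + 1), if (k : ℕ) < i then lam ^ 2 * t k * Real.exp (-lam * t k) else 1) *
      ∫ u in (0 : ℝ)..t (Fin.last i),
        (1 + lam * u) * Real.exp (-lam * u) *
          (lam ^ 2 * (t (Fin.last i) - u) * Real.exp (-lam * (t (Fin.last i) - u))) *
          g lam A B (u + T t 0 i) :=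
  stmt5_general lam Δ τ A B hΔτ i t hpos hsum
end

section
/- For every integer m ≥ 1, the map (t₀, …, t_m) ↦ ∫_{Σ_{j=0}^{m−1} t_j}^{Δ} g(s) · ∏_{k=0}^{m} F(t_k, s − Σ_{j=0}^{k−1} t_j) ds is continuous on the domain D_m = {(t₀, …, t_m) : t_j > 0 for all j, Σ_{j=0}^{m−1} t_j < Δ, and t_m < τ}. -/
open Real Set Filter MeasureTheory

/-!
Split the integral at the lower limit `T t₀ 0 m` of the base point `t₀`. Near `t₀` the integrand
is bounded on compact sets of `s` by a continuous majorant, so the piece between the moving and the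
fixed lower limit is `O(|T t 0 m - T t₀ 0 m|)`. The remaining piece is continuous by dominated
convergence: for fixed `s`, the factor `F (t k) (s - T t 0 k)` is continuous in `t` at `t₀` unless
`t₀ k` hits one of the breakpoints `s - T t₀ 0 k` and `s - T t₀ 0 k + τ` of `F`, which excludes only
finitely many `s` (the breakpoint `0` is ruled out by `0 < t₀ k`).
-/

open Topology Interval

theorem exists_eventually_norm_le_of_continuous_majorant {X E : Type*} [TopologicalSpace X]
    [WeaklyLocallyCompactSpace X] [NormedAddCommGroup E] {f : X → ℝ → E} {G : X × ℝ → ℝ}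
    (hG : Continuous G) (hfG : ∀ x s, ‖f x s‖ ≤ G (x, s)) (x₀ : X) {K : Set ℝ}
    (hK : IsCompact K) : ∃ C, ∀ᶠ x in 𝓝 x₀, ∀ s ∈ K, ‖f x s‖ ≤ C := by
  obtain ⟨L, hL, hLx₀⟩ := exists_compact_mem_nhds x₀
  obtain ⟨C, hC⟩ := (hL.prod hK).exists_bound_of_continuousOn hG.continuousOn
  refine ⟨C, ?_⟩
  filter_upwards [hLx₀] with x hx s hs
  exact (hfG x s).trans ((le_abs_self _).trans (hC (x, s) ⟨hx, hs⟩))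

theorem continuousAt_intervalIntegral_of_dominated {X E : Type*} [TopologicalSpace X]
    [FirstCountableTopology X] [NormedAddCommGroup E] [NormedSpace ℝ E]
    {f : X → ℝ → E} {a : X → ℝ} {b : ℝ} {x₀ : X} (ha : ContinuousAt a x₀)
    (hmeas : ∀ᶠ x in 𝓝 x₀, AEStronglyMeasurable (f x))
    (hbound : ∀ K, IsCompact K → ∃ C, ∀ᶠ x in 𝓝 x₀, ∀ s ∈ K, ‖f x s‖ ≤ C)
    (hcont : ∀ᵐ s, ContinuousAt (f · s) x₀) :
    ContinuousAt (fun x => ∫ s in a x..b, f x s) x₀ := by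
  set K := Icc (min (a x₀) b - 1) (max (a x₀) b + 1)
  obtain ⟨C, hC⟩ := hbound K isCompact_Icc
  have haK : a x₀ ∈ K := ⟨by linarith [min_le_left (a x₀) b], by linarith [le_max_left (a x₀) b]⟩
  have hbK : b ∈ K := ⟨by linarith [min_le_right (a x₀) b], by linarith [le_max_right (a x₀) b]⟩
  have hnear : ∀ᶠ x in 𝓝 x₀, a x ∈ K :=
    ha.eventually_mem (Icc_mem_nhds (by linarith [min_le_left (a x₀) b])
      (by linarith [le_max_left (a x₀) b]))
  have hsub : ∀ {u v}, u ∈ K → v ∈ K → Ι u v ⊆ K := fun hu hv =>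
    uIoc_subset_uIcc.trans (uIcc_subset_Icc hu hv)
  have hint : ∀ {x u v}, AEStronglyMeasurable (f x) → (∀ s ∈ K, ‖f x s‖ ≤ C) →
      u ∈ K → v ∈ K → IntervalIntegrable (f x) volume u v := fun hx hxC hu hv =>
    intervalIntegrable_const.mono_fun' hx.restrict
      ((ae_restrict_iff' measurableSet_uIoc).2 (ae_of_all _ fun s hs => hxC s (hsub hu hv hs)))
  have hfixed : ContinuousAt (fun x => ∫ s in a x₀..b, f x s) x₀ :=
    intervalIntegral.continuousAt_of_dominated_interval (hmeas.mono fun x hx => hx.restrict)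
      (hC.mono fun x hx => ae_of_all _ fun s hs => hx s (hsub haK hbK hs)) intervalIntegrable_const
      (hcont.mono fun s hs _ => hs)
  have hmoving : Tendsto (fun x => ∫ s in a x..a x₀, f x s) (𝓝 x₀) (𝓝 0) := by
    refine squeeze_zero_norm' (a := fun x => C * |a x₀ - a x|) ?_ ?_
    · filter_upwards [hC, hnear] with x hx hxK
      exact intervalIntegral.norm_integral_le_of_norm_le_const fun s hs => hx s (hsub hxK haK hs)
    · simpa using ((tendsto_const_nhds (x := a x₀)).sub ha).abs.const_mul C
  refine (by simpa using hmoving.add hfixed : Tendsto _ _ _).congr' ?_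
  filter_upwards [hmeas, hC, hnear] with x hxm hxC hxK
  exact intervalIntegral.integral_add_adjacent_intervals (hint hxm hxC hxK haK)
    (hint hxm hxC haK hbK)

@[fun_prop]
theorem continuous_T {n : ℕ} (p q : ℕ) : Continuous fun t : Fin n → ℝ => T t p q :=
  continuous_finsetSum _ fun j _ => by split_ifs <;> fun_prop

theorem measurable_F (lam τ t : ℝ) : Measurable (F lam τ t) := by
  refine Measurable.ite ?_ (by fun_prop) (Measurable.ite ?_ (by fun_prop) measurable_const)
  · exact (MeasurableSet.const _).inter measurableSet_Ioi
  · exact measurableSet_le measurable_id measurable_const |>.inter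
      (measurableSet_le measurable_const (measurable_id.add_const τ))

theorem exists_continuous_abs_F_le (lam τ : ℝ) :
    ∃ G : ℝ × ℝ → ℝ, Continuous G ∧ ∀ t s, |F lam τ t s| ≤ G (t, s) := by
  refine ⟨fun p => |lam ^ 2 * p.1 * exp (-lam * p.1)| +
    |(1 + lam * p.2) * exp (-lam * p.2) * (lam ^ 2 * (p.1 - p.2) * exp (-lam * (p.1 - p.2)))|,
    by fun_prop, fun t s => ?_⟩
  unfold F
  split_ifs
  · exact le_add_of_nonneg_right (abs_nonneg _)
  · exact le_add_of_nonneg_left (abs_nonneg _)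
  · rw [abs_zero]; positivity

theorem continuousAt_F (lam τ : ℝ) {t s : ℝ} (ht : 0 < t) (hts : t ≠ s) (htsτ : t ≠ s + τ) :
    ContinuousAt (fun p : ℝ × ℝ => F lam τ p.1 p.2) (t, s) := by
  rcases hts.lt_or_gt with hts | hst
  · have hnear : ∀ᶠ p : ℝ × ℝ in 𝓝 (t, s), 0 < p.1 ∧ p.1 < p.2 :=
      (continuousAt_const.eventually_lt continuousAt_fst ht).and
        (continuousAt_fst.eventually_lt continuousAt_snd hts)
    refine ContinuousAt.congr (f := fun p : ℝ × ℝ => lam ^ 2 * p.1 * exp (-lam * p.1))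
      (by fun_prop) ?_
    filter_upwards [hnear] with p hp
    simp only [F, if_pos hp]
  rcases htsτ.lt_or_gt with htsτ | hsτt
  · have hnear : ∀ᶠ p : ℝ × ℝ in 𝓝 (t, s), p.2 < p.1 ∧ p.1 < p.2 + τ :=
      (continuousAt_snd.eventually_lt continuousAt_fst hst).and
        (continuousAt_fst.eventually_lt (continuousAt_snd.add continuousAt_const) htsτ)
    refine ContinuousAt.congr (f := fun p : ℝ × ℝ => (1 + lam * p.2) * exp (-lam * p.2) *
      (lam ^ 2 * (p.1 - p.2) * exp (-lam * (p.1 - p.2)))) (by fun_prop) ?_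
    filter_upwards [hnear] with p hp
    have hp₁ : ¬(0 < p.1 ∧ p.1 < p.2) := fun h => hp.1.not_gt h.2
    simp only [F, if_neg hp₁, if_pos (And.intro hp.1.le hp.2.le)]
  · have hnear : ∀ᶠ p : ℝ × ℝ in 𝓝 (t, s), p.2 < p.1 ∧ p.2 + τ < p.1 :=
      (continuousAt_snd.eventually_lt continuousAt_fst hst).and
        ((continuousAt_snd.add continuousAt_const).eventually_lt continuousAt_fst hsτt)
    refine ContinuousAt.congr (f := fun _ => 0) continuousAt_const ?_
    filter_upwards [hnear] with p hp
    have hp₁ : ¬(0 < p.1 ∧ p.1 < p.2) := fun h => hp.1.not_gt h.2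
    have hp₂ : ¬(p.2 ≤ p.1 ∧ p.1 ≤ p.2 + τ) := fun h => hp.2.not_ge h.2
    simp only [F, if_neg hp₁, if_neg hp₂]

theorem ae_continuousAt_prod_F {n : ℕ} (lam τ : ℝ) {t₀ : Fin n → ℝ} (hpos : ∀ k, 0 < t₀ k) :
    ∀ᵐ s, ContinuousAt (fun t : Fin n → ℝ => ∏ k, F lam τ (t k) (s - T t 0 k)) t₀ := by
  have hbad : (⋃ k, ({t₀ k + T t₀ 0 k, t₀ k + T t₀ 0 k - τ} : Set ℝ)).Countable :=
    countable_iUnion fun k => (countable_singleton _).insert _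
  filter_upwards [hbad.ae_notMem volume] with s hs
  refine tendsto_finsetProd _ fun k _ => ?_
  simp only [mem_iUnion, mem_insert_iff, mem_singleton_iff, not_exists, not_or] at hs
  have hcomp : ContinuousAt (fun t : Fin n → ℝ => (t k, s - T t 0 k)) t₀ := by fun_prop
  have hF := continuousAt_F lam τ (t := t₀ k) (s := s - T t₀ 0 k) (hpos k)
    (fun h => (hs k).1 (by linarith)) (fun h => (hs k).2 (by linarith))
  exact hF.comp (x := t₀) hcomp

theorem stmt6_general (lam Δ τ A B : ℝ) (m : ℕ) :
    ContinuousOn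
      (fun t : Fin (m + 1) → ℝ =>
        ∫ s in T t 0 m..Δ,
          g lam A B s * ∏ k : Fin (m + 1), F lam τ (t k) (s - T t 0 (k : ℕ)))
      {t : Fin (m + 1) → ℝ | (∀ j, 0 < t j) ∧ T t 0 m < Δ ∧ t (Fin.last m) < τ} := by
  rintro t₀ ⟨hpos, -, -⟩
  have hg : Continuous (g lam A B) := by unfold g; fun_prop
  obtain ⟨G, hG, hFG⟩ := exists_continuous_abs_F_le lam τ
  refine (continuousAt_intervalIntegral_of_dominated (continuous_T 0 m).continuousAt
    ?_ ?_ ?_).continuousWithinAt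
  · exact Eventually.of_forall fun t => (hg.measurable.mul (Finset.measurable_prod _ fun k _ =>
      (measurable_F lam τ (t k)).comp (measurable_id.sub_const _))).aestronglyMeasurable
  · refine fun K hK => exists_eventually_norm_le_of_continuous_majorant
      (G := fun p : (Fin (m + 1) → ℝ) × ℝ =>
        |g lam A B p.2| * ∏ k : Fin (m + 1), G (p.1 k, p.2 - T p.1 0 k))
      (by fun_prop) (fun t s => ?_) t₀ hK
    rw [Real.norm_eq_abs, abs_mul, Finset.abs_prod]
    gcongr with k
    exact hFG _ _
  · exact (ae_continuousAt_prod_F lam τ hpos).mono fun s hs => continuousAt_const.mul hs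

/-- for every `m ≥ 1`, the map
`(t₀,…,t_m) ↦ ∫_{Σ_{j<m} t_j}^{Δ} g(s) ∏_{k=0}^{m} F(t_k, s − Σ_{j<k} t_j) ds`
is continuous on `D_m = {t_j > 0 ∀ j, Σ_{j=0}^{m−1} t_j < Δ, t_m < τ}`. -/
theorem stmt6 (lam Δ τ A B : ℝ) (hlam : 0 < lam) (hΔ : 0 < Δ) (hΔτ : Δ < τ)
    (m : ℕ) (hm : 1 ≤ m) :
    ContinuousOn
      (fun t : Fin (m + 1) → ℝ =>
        ∫ s in T t 0 m..Δ,
          g lam A B s * ∏ k : Fin (m + 1), F lam τ (t k) (s - T t 0 (k : ℕ)))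
      {t : Fin (m + 1) → ℝ | (∀ j, 0 < t j) ∧ T t 0 m < Δ ∧ t (Fin.last m) < τ} :=
  stmt6_general lam Δ τ A B m
end

section
/- The single-interval output density P(t) = ∫₀^Δ g(s) F(t, s) ds + a·F(t, Δ) is continuous at every point of (0, Δ) ∪ (Δ, τ), and its one-sided limits at t = Δ exist with (limit from below) − (limit from above) = a · λ²·Δ·exp(−λ·Δ) > 0; i.e., the output interspike-interval probability density has a jump discontinuity exactly at the feedback delay t = Δ. -/
open Real Set Filter MeasureTheory

/-!
For fixed `s`, `t ↦ F t s` is continuous on `(0, s + τ)` except at `t = s`, where it drops from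
`λ² s e^{-λs}` to `0`. Against the regular density `g` these jumps sit on a null set of `s`, so by
dominated convergence (with `|F t s| ≤ λ² (1 + λ s) |t|`) the integral term is continuous on
`(0, τ)`. The whole discontinuity of `P` therefore comes from the atom of weight `a > 0` at
`s = Δ`, which makes `P` jump by `a λ² Δ e^{-λΔ}` at `t = Δ`.
-/

open Topology Interval

theorem F_of_pos_of_lt {lam τ t s : ℝ} (ht : 0 < t) (hts : t < s) :
    F lam τ t s = lam ^ 2 * t * exp (-lam * t) := by
  simp [F, ht, hts]

theorem F_of_le_of_le_add {lam τ t s : ℝ} (hst : s ≤ t) (htτ : t ≤ s + τ) :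
    F lam τ t s =
      (1 + lam * s) * exp (-lam * s) * (lam ^ 2 * (t - s) * exp (-lam * (t - s))) := by
  simp [F, hst, htτ, hst.not_gt]

theorem abs_F_le {lam τ t s : ℝ} (hlam : 0 ≤ lam) (hs : 0 ≤ s) :
    |F lam τ t s| ≤ lam ^ 2 * (1 + lam * s) * |t| := by
  have hexp : ∀ x, 0 ≤ x → exp (-lam * x) ≤ 1 := fun x hx =>
    exp_le_one_iff.2 (by nlinarith)
  have hls : 0 ≤ lam * s := mul_nonneg hlam hs
  unfold F
  split_ifs with h₁ h₂
  · obtain ⟨ht, -⟩ := h₁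
    rw [abs_of_nonneg (by positivity), abs_of_pos ht]
    calc lam ^ 2 * t * exp (-lam * t) ≤ lam ^ 2 * t * 1 := by gcongr; exact hexp t ht.le
      _ ≤ lam ^ 2 * (1 + lam * s) * t := by nlinarith [mul_nonneg (sq_nonneg lam) ht.le]
  · obtain ⟨hst, -⟩ := h₂
    have hts : 0 ≤ t - s := sub_nonneg.2 hst
    rw [abs_of_nonneg (by positivity), abs_of_nonneg (hs.trans hst)]
    calc (1 + lam * s) * exp (-lam * s) * (lam ^ 2 * (t - s) * exp (-lam * (t - s)))
        ≤ (1 + lam * s) * 1 * (lam ^ 2 * (t - s) * 1) := by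
          gcongr
          exacts [hexp s hs, hexp _ hts]
      _ ≤ lam ^ 2 * (1 + lam * s) * t := by
          nlinarith [mul_nonneg (sq_nonneg lam) (by linarith : 0 ≤ 1 + lam * s)]
  · rw [abs_zero]; positivity

theorem continuousAt_F_of_ne {lam τ s t₀ : ℝ} (ht₀ : 0 < t₀) (ht₀τ : t₀ < s + τ)
    (hne : t₀ ≠ s) : ContinuousAt (fun t => F lam τ t s) t₀ := by
  rcases hne.lt_or_gt with h | h
  · refine ContinuousAt.congr (by fun_prop) (f := fun t => lam ^ 2 * t * exp (-lam * t)) ?_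
    filter_upwards [Ioo_mem_nhds ht₀ h] with t ht
    exact (F_of_pos_of_lt ht.1 ht.2).symm
  · refine ContinuousAt.congr (by fun_prop) (f := fun t =>
      (1 + lam * s) * exp (-lam * s) * (lam ^ 2 * (t - s) * exp (-lam * (t - s)))) ?_
    filter_upwards [Ioo_mem_nhds h ht₀τ] with t ht
    exact (F_of_le_of_le_add ht.1.le ht.2.le).symm

theorem continuousAt_intervalIntegral_mul_F {lam τ a b t₀ : ℝ} {φ : ℝ → ℝ}
    (hφ : IntervalIntegrable φ volume a b) (hlam : 0 ≤ lam) (ha : 0 ≤ a) (hab : a ≤ b)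
    (ht₀ : 0 < t₀) (ht₀τ : t₀ < τ) :
    ContinuousAt (fun t => ∫ s in a..b, φ s * F lam τ t s) t₀ := by
  have hI : Ι a b = Ioc a b := uIoc_of_le hab
  set K := lam ^ 2 * (1 + lam * b) * (t₀ + 1)
  refine intervalIntegral.continuousAt_of_dominated_interval (bound := fun s => ‖φ s‖ * K)
    ?_ ?_ (hφ.norm.mul_const K) ?_
  · exact .of_forall fun t => hφ.def'.aestronglyMeasurable.mul
      (measurable_F lam τ t).aestronglyMeasurable
  · filter_upwards [Ioo_mem_nhds ht₀ (lt_add_one t₀)] with t ht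
    refine .of_forall fun s hs => ?_
    rw [hI] at hs
    have hs₀ : 0 ≤ s := ha.trans hs.1.le
    rw [norm_mul, Real.norm_eq_abs (F _ _ _ _)]
    refine mul_le_mul_of_nonneg_left ?_ (norm_nonneg _)
    calc |F lam τ t s| ≤ lam ^ 2 * (1 + lam * s) * |t| := abs_F_le hlam hs₀
      _ ≤ lam ^ 2 * (1 + lam * b) * (t₀ + 1) := by
        have hlb : 0 ≤ lam * b := mul_nonneg hlam (ha.trans hab)
        rw [abs_of_pos ht.1]
        gcongr
        exacts [ht.1.le, hs.2, ht.2.le]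
  · filter_upwards [Measure.ae_ne volume t₀] with s hne hs
    rw [hI] at hs
    exact continuousAt_const.mul
      (continuousAt_F_of_ne ht₀ (by linarith [hs.1]) hne.symm)

theorem tendsto_F_nhdsLT {lam τ s : ℝ} (hs : 0 < s) :
    Tendsto (fun t => F lam τ t s) (𝓝[<] s) (𝓝 (lam ^ 2 * s * exp (-lam * s))) := by
  refine ((by fun_prop : Continuous fun t => lam ^ 2 * t * exp (-lam * t)).tendsto s
    |>.mono_left nhdsWithin_le_nhds).congr' ?_
  filter_upwards [Ioo_mem_nhdsLT hs] with t ht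
  exact (F_of_pos_of_lt ht.1 ht.2).symm

theorem tendsto_F_nhdsGT {lam τ s : ℝ} (hτ : 0 < τ) :
    Tendsto (fun t => F lam τ t s) (𝓝[>] s) (𝓝 0) := by
  have hcont : Continuous fun t =>
      (1 + lam * s) * exp (-lam * s) * (lam ^ 2 * (t - s) * exp (-lam * (t - s))) := by
    fun_prop
  have hlim := (hcont.tendsto s).mono_left (nhdsWithin_le_nhds (s := Ioi s))
  simp only [sub_self, mul_zero, zero_mul] at hlim
  refine hlim.congr' ?_
  filter_upwards [Ioo_mem_nhdsGT (lt_add_of_pos_right s hτ)] with t ht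
  exact (F_of_le_of_le_add ht.1.le ht.2.le).symm

-- `(3 + x) eˣ + 1 = eˣ (3 + x + e⁻ˣ) ≥ 4 eˣ` since `e⁻ˣ ≥ 1 - x`.
theorem aC_pos (lam Δ : ℝ) : 0 < aC lam Δ := by
  set x := 2 * lam * Δ
  have hx : 1 - x ≤ exp (-x) := by linarith [add_one_le_exp (-x)]
  have hmul : exp x * exp (-x) = 1 := by rw [← exp_add, add_neg_cancel, exp_zero]
  have hpos := exp_pos x
  exact div_pos (by positivity) (by nlinarith)

/-- the single-interval output density
`P(t) = ∫₀^Δ g(s) F(t,s) ds + a F(t,Δ)` is continuous on `(0,Δ) ∪ (Δ,τ)` and has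
one-sided limits at `t = Δ` with jump
(left limit) − (right limit) `= a λ² Δ e^{−λΔ} > 0`. -/
theorem stmt18 (lam Δ τ A B : ℝ) (hlam : 0 < lam) (hΔ : 0 < Δ) (hΔτ : Δ < τ) :
    (∀ t ∈ Set.Ioo (0 : ℝ) Δ ∪ Set.Ioo Δ τ,
      ContinuousAt
        (fun t => (∫ s in (0 : ℝ)..Δ, g lam A B s * F lam τ t s) + aC lam Δ * F lam τ t Δ)
        t) ∧
    ∃ L₁ L₂ : ℝ,
      Filter.Tendsto
        (fun t => (∫ s in (0 : ℝ)..Δ, g lam A B s * F lam τ t s) + aC lam Δ * F lam τ t Δ)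
        (nhdsWithin Δ (Set.Iio Δ)) (nhds L₁) ∧
      Filter.Tendsto
        (fun t => (∫ s in (0 : ℝ)..Δ, g lam A B s * F lam τ t s) + aC lam Δ * F lam τ t Δ)
        (nhdsWithin Δ (Set.Ioi Δ)) (nhds L₂) ∧
      L₁ - L₂ = aC lam Δ * (lam ^ 2 * Δ * Real.exp (-lam * Δ)) ∧
      0 < L₁ - L₂ := by
  have hg : IntervalIntegrable (g lam A B) volume 0 Δ :=
    (by unfold g; fun_prop : Continuous (g lam A B)).intervalIntegrable 0 Δ
  have hint : ∀ t₀, 0 < t₀ → t₀ < τ →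
      ContinuousAt (fun t => ∫ s in (0 : ℝ)..Δ, g lam A B s * F lam τ t s) t₀ :=
    fun t₀ ht₀ ht₀τ => continuousAt_intervalIntegral_mul_F hg hlam.le le_rfl hΔ.le ht₀ ht₀τ
  refine ⟨?_, ?_⟩
  · rintro t (⟨ht₀, htΔ⟩ | ⟨hΔt, htτ⟩)
    · exact (hint t ht₀ (htΔ.trans hΔτ)).add
        (continuousAt_const.mul (continuousAt_F_of_ne ht₀ (by linarith) htΔ.ne))
    · exact (hint t (hΔ.trans hΔt) htτ).add
        (continuousAt_const.mul (continuousAt_F_of_ne (hΔ.trans hΔt) (by linarith) hΔt.ne'))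
  · set I := ∫ s in (0 : ℝ)..Δ, g lam A B s * F lam τ Δ s
    have hI := (hint Δ hΔ hΔτ).tendsto
    have hjump : 0 < aC lam Δ * (lam ^ 2 * Δ * exp (-lam * Δ)) :=
      mul_pos (aC_pos lam Δ) (by positivity)
    refine ⟨I + aC lam Δ * (lam ^ 2 * Δ * exp (-lam * Δ)), I + aC lam Δ * 0,
      ?_, ?_, by ring, by linarith⟩
    · exact (hI.mono_left nhdsWithin_le_nhds).add ((tendsto_F_nhdsLT hΔ).const_mul _)
    · exact (hI.mono_left nhdsWithin_le_nhds).add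
        ((tendsto_F_nhdsGT (hΔ.trans hΔτ)).const_mul _)
end
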